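/- Let 𝒱 be a left skew-closed category, 𝒜 a 𝒱-category, K an object of 𝒜, T : 𝒜 → 𝒱 a 𝒱-functor, and ξ : I → TK a morphism in 𝒱. Then the family of morphisms ξ̂_A = i_{TA} ∘ [ξ,1] ∘ T_{K,A} : 𝒜(K,A) → TA is a 𝒱-natural transformation 𝒜(K,-) ⇒ T. -/

import Mathlib

open CategoryTheory

universe v u w

/-- A left skew-closed category structure on a category `V` (Street, "Skew-closed categories"). -/
structure SkewClosedStruct (V : Type u) [Category.{v} V] where
  ihom : V → V → V
  imap : ∀ {A A' B B' : V}, (A' ⟶ A) → (B ⟶ B') → (ihom A B ⟶ ihom A' B')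
  imap_id : ∀ (A B : V), imap (𝟙 A) (𝟙 B) = 𝟙 (ihom A B)
  imap_comp : ∀ {A A' A'' B B' B'' : V} (f : A' ⟶ A) (f' : A'' ⟶ A') (g : B ⟶ B') (g' : B' ⟶ B''),
      imap (f' ≫ f) (g ≫ g') = imap f g ≫ imap f' g'
  unit : V
  i : ∀ A : V, ihom unit A ⟶ A
  i_natural : ∀ {A B : V} (f : A ⟶ B), imap (𝟙 unit) f ≫ i B = i A ≫ f
  j : ∀ A : V, unit ⟶ ihom A A
  j_natural : ∀ {A B : V} (f : A ⟶ B), j A ≫ imap (𝟙 A) f = j B ≫ imap f (𝟙 B)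
  L : ∀ A B C : V, ihom B C ⟶ ihom (ihom A B) (ihom A C)
  L_natural : ∀ {B B' C C' : V} (A : V) (f : B' ⟶ B) (g : C ⟶ C'),
      imap f g ≫ L A B' C' = L A B C ≫ imap (imap (𝟙 A) f) (imap (𝟙 A) g)
  L_extranatural : ∀ {A A' : V} (h : A' ⟶ A) (B C : V),
      L A B C ≫ imap (𝟙 (ihom A B)) (imap h (𝟙 C))
        = L A' B C ≫ imap (imap h (𝟙 B)) (𝟙 (ihom A' C))
  SCC1 : ∀ A B C D : V,
      L A C D ≫ L (ihom A B) (ihom A C) (ihom A D) ≫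
          imap (L A B C) (𝟙 (ihom (ihom A B) (ihom A D)))
        = L B C D ≫ imap (𝟙 (ihom B C)) (L A B D)
  SCC2 : ∀ A C : V, L A A C ≫ imap (j A) (𝟙 (ihom A C)) ≫ i (ihom A C) = 𝟙 (ihom A C)
  SCC3 : ∀ A B : V, j B ≫ L A B B = j (ihom A B)
  SCC4 : ∀ B C : V, L unit B C ≫ imap (𝟙 (ihom unit B)) (i C) = imap (i B) (𝟙 C)
  SCC5 : j unit ≫ i unit = 𝟙 unit

/-- A category enriched in the left skew-closed category `𝒱`. -/
structure VCat (V : Type u) [Category.{v} V] (𝒱 : SkewClosedStruct V) where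
  Obj : Type w
  Hom : Obj → Obj → V
  id : ∀ A, 𝒱.unit ⟶ Hom A A
  comp : ∀ A B C, Hom B C ⟶ 𝒱.ihom (Hom A B) (Hom A C)
  EC1 : ∀ A B C D,
      comp A C D ≫ 𝒱.L (Hom A B) (Hom A C) (Hom A D) ≫
          𝒱.imap (comp A B C) (𝟙 (𝒱.ihom (Hom A B) (Hom A D)))
        = comp B C D ≫ 𝒱.imap (𝟙 (Hom B C)) (comp A B D)
  EC2 : ∀ A C, comp A A C ≫ 𝒱.imap (id A) (𝟙 (Hom A C)) ≫ 𝒱.i (Hom A C) = 𝟙 (Hom A C)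
  EC3 : ∀ A B, id B ≫ comp A B B = 𝒱.j (Hom A B)

/-- A `𝒱`-functor between `𝒱`-categories. -/
structure VFun {V : Type u} [Category.{v} V] {𝒱 : SkewClosedStruct V}
    (𝒜 : VCat.{v, u, w} V 𝒱) (𝒳 : VCat.{v, u, w} V 𝒱) where
  obj : 𝒜.Obj → 𝒳.Obj
  map : ∀ A B, 𝒜.Hom A B ⟶ 𝒳.Hom (obj A) (obj B)
  EF1 : ∀ A B C,
      map A C ≫ 𝒳.comp (obj B) (obj A) (obj C) ≫
          𝒱.imap (map B A) (𝟙 (𝒳.Hom (obj B) (obj C)))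
        = 𝒜.comp B A C ≫ 𝒱.imap (𝟙 (𝒜.Hom B A)) (map B C)
  EF2 : ∀ A, 𝒜.id A ≫ map A A = 𝒳.id (obj A)

/-- The ground skew-closed category `𝒱`, regarded as a `𝒱`-category. -/
@[reducible] def SkewClosedStruct.self {V : Type u} [Category.{v} V] (𝒱 : SkewClosedStruct V) :
    VCat.{v, u, u} V 𝒱 where
  Obj := V
  Hom := 𝒱.ihom
  id := 𝒱.j
  comp := 𝒱.L
  EC1 := 𝒱.SCC1
  EC2 := 𝒱.SCC2
  EC3 := 𝒱.SCC3

/-- A `𝒱`-natural transformation between `𝒱`-functors with values in `𝒱` itself. -/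
structure VNat {V : Type u} [Category.{v} V] {𝒱 : SkewClosedStruct V}
    {𝒜 : VCat.{v, u, u} V 𝒱} (S T : VFun 𝒜 𝒱.self) where
  app : ∀ A, S.obj A ⟶ T.obj A
  naturality : ∀ A B,
      T.map A B ≫ 𝒱.imap (app A) (𝟙 (T.obj B))
        = S.map A B ≫ 𝒱.imap (𝟙 (S.obj A)) (app B)

/-- The representable `𝒱`-functor `𝒜(K,-) : 𝒜 ⟶ 𝒱`. -/
def VCat.repr {V : Type u} [Category.{v} V] {𝒱 : SkewClosedStruct V}
    (𝒜 : VCat.{v, u, u} V 𝒱) (K : 𝒜.Obj) : VFun 𝒜 𝒱.self where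
  obj := fun A => 𝒜.Hom K A
  map := fun A B => 𝒜.comp K A B
  EF1 := fun A B C => 𝒜.EC1 K B A C
  EF2 := fun A => 𝒜.EC3 K A

/-!
Write `ev_ξ = i ∘ [ξ,1] : [X,Y] → Y` for evaluation at a global element `ξ : I → X`, so that
`ξ̂_A = ev_ξ ∘ T_{K,A}`. Extranaturality of `L` in its first variable together with (SCC4) gives
`[ev_ξ,1] = [1,ev_ξ] ∘ L^X`; with this, `[ξ̂_A,1] ∘ T_{A,B}` becomes `[1,ev_ξ] ∘ [T_{K,A},1] ∘ L ∘ T_{A,B}`,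
and (EF1) for `T` turns this into `[1,ev_ξ ∘ T_{K,B}] ∘ L^K = [1,ξ̂_B] ∘ L^K`.
-/

namespace SkewClosedStruct

variable {V : Type u} [Category.{v} V] (𝒱 : SkewClosedStruct V)

lemma imap_comp_left {A A' A'' B : V} (f : A' ⟶ A) (f' : A'' ⟶ A') :
    𝒱.imap (f' ≫ f) (𝟙 B) = 𝒱.imap f (𝟙 B) ≫ 𝒱.imap f' (𝟙 B) := by
  simpa using 𝒱.imap_comp f f' (𝟙 B) (𝟙 B)

lemma imap_comp_right {A B B' B'' : V} (g : B ⟶ B') (g' : B' ⟶ B'') :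
    𝒱.imap (𝟙 A) (g ≫ g') = 𝒱.imap (𝟙 A) g ≫ 𝒱.imap (𝟙 A) g' := by
  simpa using 𝒱.imap_comp (𝟙 A) (𝟙 A) g g'

lemma imap_left_comm_right {A A' B B' : V} (f : A' ⟶ A) (g : B ⟶ B') :
    𝒱.imap f (𝟙 B) ≫ 𝒱.imap (𝟙 A') g = 𝒱.imap (𝟙 A) g ≫ 𝒱.imap f (𝟙 B') := by
  rw [← 𝒱.imap_comp, ← 𝒱.imap_comp]
  simp

lemma imap_eval_left {X : V} (x : 𝒱.unit ⟶ X) (Y Z : V) :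
    𝒱.imap (𝒱.imap x (𝟙 Y) ≫ 𝒱.i Y) (𝟙 Z)
      = 𝒱.L X Y Z ≫ 𝒱.imap (𝟙 (𝒱.ihom X Y)) (𝒱.imap x (𝟙 Z) ≫ 𝒱.i Z) := by
  rw [imap_comp_right, ← Category.assoc, 𝒱.L_extranatural x Y Z, Category.assoc,
    imap_left_comm_right, ← Category.assoc, 𝒱.SCC4 Y Z, ← imap_comp_left]

end SkewClosedStruct

/-- (Street, "Skew-closed categories", §4, first part of the proof of the Yoneda lemma.)
Given `ξ : I ⟶ TK`, the family `ξ̂_A = i_{TA} ∘ [ξ,1] ∘ T_{K,A} : 𝒜(K,A) ⟶ TA`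
is a `𝒱`-natural transformation `𝒜(K,-) ⇒ T`. -/
theorem xi_hat_is_V_natural {V : Type u} [Category.{v} V] (𝒱 : SkewClosedStruct V)
    (𝒜 : VCat.{v, u, u} V 𝒱) (K : 𝒜.Obj) (T : VFun 𝒜 𝒱.self)
    (ξ : 𝒱.unit ⟶ T.obj K) :
    ∀ A B : 𝒜.Obj,
      T.map A B ≫
          𝒱.imap (T.map K A ≫ 𝒱.imap ξ (𝟙 (T.obj A)) ≫ 𝒱.i (T.obj A)) (𝟙 (T.obj B))
        = 𝒜.comp K A B ≫
            𝒱.imap (𝟙 (𝒜.Hom K A))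
              (T.map K B ≫ 𝒱.imap ξ (𝟙 (T.obj B)) ≫ 𝒱.i (T.obj B)) := by
  intro A B
  calc T.map A B ≫ 𝒱.imap (T.map K A ≫ 𝒱.imap ξ (𝟙 _) ≫ 𝒱.i _) (𝟙 _)
      = (T.map A B ≫ 𝒱.L (T.obj K) (T.obj A) (T.obj B) ≫ 𝒱.imap (T.map K A) (𝟙 _))
          ≫ 𝒱.imap (𝟙 _) (𝒱.imap ξ (𝟙 _) ≫ 𝒱.i _) := by
        rw [𝒱.imap_comp_left, 𝒱.imap_eval_left]
        simp only [Category.assoc, 𝒱.imap_left_comm_right]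
    _ = 𝒜.comp K A B ≫ 𝒱.imap (𝟙 _) (T.map K B ≫ 𝒱.imap ξ (𝟙 _) ≫ 𝒱.i _) := by
        rw [T.EF1 A K B, Category.assoc, ← 𝒱.imap_comp_right]
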